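/- arXiv:1611.08720 — 4 statements merged into one kernel-verified Lean document; each statement's English description precedes it below -/
import Mathlib

section
/- Let R be a commutative ring of characteristic p > 0 and t ∈ R. Then in the ring of truncated Witt vectors W_m(R), the difference [1+t] − [1] of Teichmüller representatives equals a Witt vector (y_0, ..., y_{m−1}) with y_i ≡ t mod t²R for all 0 ≤ i ≤ m−1. -/
open WittVector Polynomial

private lemma pow_sq_zero {B : Type*} [CommRing B] {e : B} (he : e ^ 2 = 0)
    {k : ℕ} (hk : 2 ≤ k) : e ^ k = 0 := by
  obtain ⟨j, rfl⟩ := Nat.exists_eq_add_of_le hk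
  rw [pow_add, he, zero_mul]

private lemma one_add_pow {B : Type*} [CommRing B] {e : B} (he : e ^ 2 = 0)
    (N : ℕ) : (1 + e) ^ N = 1 + (N : B) * e := by
  induction N with
  | zero => simp
  | succ n ih =>
    rw [pow_succ, ih]
    push_cast
    ring_nf
    rw [he]
    ring

private lemma key (p : ℕ) [Fact p.Prime] {B : Type*} [CommRing B] [Invertible (p : B)]
    {e : B} (he : e ^ 2 = 0) :
    WittVector.teichmuller p (1 + e) = 1 + WittVector.mk p (fun _ => e) := by
  apply (WittVector.ghostMap.bijective_of_invertible p B).1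
  funext n
  rw [WittVector.ghostMap_apply, WittVector.ghostMap_apply,
    WittVector.ghostComponent_teichmuller, map_add, map_one,
    WittVector.ghostComponent_apply, aeval_wittPolynomial,
    WittVector.coeff_mk, one_add_pow he]
  congr 1
  rw [Finset.sum_eq_single n]
  · simp
  · intro i hi hne
    have hi' := Finset.mem_range.mp hi
    have h2 : 2 ≤ p ^ (n - i) := by
      calc 2 ≤ p := (Fact.out : p.Prime).two_le
      _ ≤ p ^ (n - i) := Nat.le_self_pow (by omega) p
    rw [pow_sq_zero he h2, mul_zero]
  · intro h
    exact absurd (Finset.self_mem_range_succ n) h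

private lemma key2 (p : ℕ) [Fact p.Prime] (n : ℕ) :
    ((WittVector.teichmuller p (1 + Polynomial.X) - 1 : WittVector p (Polynomial ℤ)).coeff n)
      - Polynomial.X ∈ Ideal.span ({Polynomial.X ^ 2} : Set (Polynomial ℤ)) := by
  set q : Polynomial ℤ :=
    ((WittVector.teichmuller p (1 + Polynomial.X) - 1 : WittVector p (Polynomial ℤ)).coeff n)
      - Polynomial.X with hq
  rw [Ideal.mem_span_singleton]
  -- pass to ℚ[X]/(X²)
  set I : Ideal (Polynomial ℚ) := Ideal.span ({Polynomial.X ^ 2} : Set (Polynomial ℚ)) with hI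
  letI : Invertible (p : ℚ) :=
    invertibleOfNonzero (by exact_mod_cast (Fact.out : p.Prime).ne_zero)
  letI : Invertible (p : Polynomial ℚ ⧸ I) := by
    refine (Invertible.map (algebraMap ℚ (Polynomial ℚ ⧸ I)) ((p : ℚ))).copy _ ?_
    simp
  set ψ : Polynomial ℤ →+* Polynomial ℚ := Polynomial.mapRingHom (Int.castRingHom ℚ) with hψ
  set π : Polynomial ℚ →+* Polynomial ℚ ⧸ I := Ideal.Quotient.mk I with hπ
  set e : Polynomial ℚ ⧸ I := π (Polynomial.X) with he'
  have he : e ^ 2 = 0 := by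
    rw [he', ← map_pow, hπ, Ideal.Quotient.eq_zero_iff_mem, hI]
    exact Ideal.mem_span_singleton_self _
  have hφq : π (ψ q) = 0 := by
    have hmap : WittVector.map (π.comp ψ)
        (WittVector.teichmuller p (1 + Polynomial.X) - 1 : WittVector p (Polynomial ℤ))
        = WittVector.mk p (fun _ => e) := by
      rw [map_sub, map_one, WittVector.map_teichmuller, map_add, map_one]
      have : (π.comp ψ) Polynomial.X = e := by simp [hψ, hπ, he']
      rw [this, key p he, add_sub_cancel_left]
    have hc : (π.comp ψ)
        ((WittVector.teichmuller p (1 + Polynomial.X) - 1 :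
          WittVector p (Polynomial ℤ)).coeff n) = e := by
      rw [← WittVector.map_coeff, hmap, WittVector.coeff_mk]
    have hx : (π.comp ψ) Polynomial.X = e := by simp [hψ, hπ, he']
    rw [hq, map_sub, map_sub, ← RingHom.comp_apply, ← RingHom.comp_apply, hc, hx, sub_self]
  have hdvd : Polynomial.X ^ 2 ∣ ψ q := by
    rw [← Ideal.mem_span_singleton]
    rw [hπ, Ideal.Quotient.eq_zero_iff_mem, hI] at hφq
    exact hφq
  rw [Polynomial.X_pow_dvd_iff] at hdvd ⊢
  intro d hd
  have := hdvd d hd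
  simp only [hψ, Polynomial.coe_mapRingHom, Polynomial.coeff_map, eq_intCast,
    Int.cast_eq_zero] at this
  exact this

/-- For a commutative ring `R` of characteristic `p > 0` and `t ∈ R`,
in the truncated Witt vectors `W_m(R)` the difference `[1+t] - [1]` of Teichmüller
representatives has all coefficients congruent to `t` modulo `t²R`. -/
theorem stmt2 (p : ℕ) [Fact p.Prime] (R : Type*) [CommRing R] [CharP R p]
    (m : ℕ) (t : R) (i : Fin m) :
    (WittVector.truncate m (WittVector.teichmuller p (1 + t))
        - WittVector.truncate m (WittVector.teichmuller p 1)).coeff i - t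
      ∈ Ideal.span ({t ^ 2} : Set R) := by
  set φ : Polynomial ℤ →+* R := (Polynomial.aeval t : Polynomial ℤ →ₐ[ℤ] R).toRingHom with hφ
  have h1 : (WittVector.truncate m (WittVector.teichmuller p (1 + t))
        - WittVector.truncate m (WittVector.teichmuller p 1)).coeff i - t
      = φ ((WittVector.teichmuller p (1 + Polynomial.X) - 1 :
          WittVector p (Polynomial ℤ)).coeff i - Polynomial.X) := by
    rw [← map_sub (WittVector.truncate m), WittVector.coeff_truncate]
    have hmap : WittVector.map φ
        (WittVector.teichmuller p (1 + Polynomial.X) - 1 : WittVector p (Polynomial ℤ))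
        = WittVector.teichmuller p (1 + t) - WittVector.teichmuller p 1 := by
      rw [map_sub, map_one, WittVector.map_teichmuller, map_add, map_one]
      simp [hφ, map_one (WittVector.teichmuller p)]
    rw [map_sub, ← WittVector.map_coeff φ _ i, hmap]
    simp [hφ]
  rw [h1]
  have h2 := key2 p (i : ℕ)
  rw [Ideal.mem_span_singleton] at h2 ⊢
  have := map_dvd φ h2
  rwa [map_pow, show φ Polynomial.X = t by simp [hφ]] at this
end

section
/- Let k be a field of characteristic p > 0 and A = k[[T_1, ..., T_{d−1}]]. Fix nonnegative integers n_1, ..., n_{d−1}. Suppose a ∈ A satisfies that all partial derivatives ∂a/∂T_i lie in the ideal (T_1^{n_1} ··· T_{d−1}^{n_{d−1}})·A (in the logarithmic sense: T_i ∂a/∂T_i ∈ (T_1^{n_1}···T_{d−1}^{n_{d−1}})). Then there exists α ∈ A with dα = 0 (i.e. α is a p-th power if k is perfect) such that a − α ∈ (T_1^{n_1} ··· T_{d−1}^{n_{d−1}}). -/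
open MvPowerSeries

/-- The logarithmic derivative `T_i ∂/∂T_i` on multivariate power series: it multiplies
the coefficient of the monomial `T^e` by `e i`. -/
noncomputable def mvLogDeriv {k : Type*} [CommRing k] {σ : Type*} (i : σ)
    (a : MvPowerSeries σ k) : MvPowerSeries σ k :=
  fun e => (e i : k) * MvPowerSeries.coeff e a

lemma prod_X_pow_eq_monomial {k : Type*} [CommRing k] (e : ℕ) (n : Fin e → ℕ) :
    (∏ j : Fin e, (MvPowerSeries.X j : MvPowerSeries (Fin e) k) ^ n j) =
      MvPowerSeries.monomial (∑ j : Fin e, Finsupp.single j (n j)) 1 := by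
  classical
  simp only [MvPowerSeries.X_pow_eq]
  induction (Finset.univ : Finset (Fin e)) using Finset.induction with
  | empty => simp [MvPowerSeries.monomial_zero_one]
  | @insert x s hx ih =>
      rw [Finset.prod_insert hx, Finset.sum_insert hx, ih,
        MvPowerSeries.monomial_mul_monomial, one_mul]

lemma mem_span_monomial_iff {k : Type*} [CommRing k] {σ : Type*} (N : σ →₀ ℕ)
    (f : MvPowerSeries σ k) :
    f ∈ Ideal.span ({MvPowerSeries.monomial N 1} : Set (MvPowerSeries σ k)) ↔
      ∀ m : σ →₀ ℕ, ¬ N ≤ m → MvPowerSeries.coeff m f = 0 := by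
  classical
  rw [Ideal.mem_span_singleton]
  constructor
  · rintro ⟨c, rfl⟩ m hm
    rw [MvPowerSeries.coeff_monomial_mul, if_neg hm]
  · intro h
    refine ⟨(fun m => MvPowerSeries.coeff (m + N) f : MvPowerSeries σ k), MvPowerSeries.ext fun m => ?_⟩
    erw [MvPowerSeries.coeff_monomial_mul]
    split_ifs with hle
    · rw [one_mul]
      have h2 : MvPowerSeries.coeff (m - N + N) f = MvPowerSeries.coeff m f := by
        rw [tsub_add_cancel_of_le hle]
      exact h2.symm
    · exact h m hle

/-- Let `k` be a field of characteristic `p > 0` and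
`A = k[[T_1, …, T_e]]`.  Fix nonnegative integers `n_1, …, n_e` and suppose `a ∈ A` has
all logarithmic partial derivatives `T_i ∂a/∂T_i` in the ideal `(T_1^{n_1} ⋯ T_e^{n_e})`.
Then there exists `α ∈ A` with `dα = 0` (all logarithmic derivatives vanish) such that
`a - α ∈ (T_1^{n_1} ⋯ T_e^{n_e})`. -/
theorem stmt8 (p : ℕ) [Fact p.Prime] (k : Type*) [Field k] [CharP k p]
    (e : ℕ) (n : Fin e → ℕ) (a : MvPowerSeries (Fin e) k)
    (ha : ∀ i : Fin e, mvLogDeriv i a ∈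
      Ideal.span ({∏ j : Fin e, (MvPowerSeries.X j : MvPowerSeries (Fin e) k) ^ n j} :
        Set (MvPowerSeries (Fin e) k))) :
    ∃ α : MvPowerSeries (Fin e) k, (∀ i : Fin e, mvLogDeriv i α = 0) ∧
      a - α ∈ Ideal.span
        ({∏ j : Fin e, (MvPowerSeries.X j : MvPowerSeries (Fin e) k) ^ n j} :
          Set (MvPowerSeries (Fin e) k)) := by
  classical
  set N : Fin e →₀ ℕ := ∑ j : Fin e, Finsupp.single j (n j) with hN
  rw [prod_X_pow_eq_monomial] at ha ⊢
  simp only [mem_span_monomial_iff] at ha ⊢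
  refine ⟨fun m => if N ≤ m then 0 else MvPowerSeries.coeff m a, ?_, ?_⟩
  · intro i
    funext m
    show (m i : k) * MvPowerSeries.coeff m _ = 0
    by_cases hle : N ≤ m
    · show (m i : k) * (if N ≤ m then 0 else _) = 0
      rw [if_pos hle, mul_zero]
    · have := ha i m hle
      show (m i : k) * (if N ≤ m then 0 else MvPowerSeries.coeff m a) = 0
      rw [if_neg hle]
      exact this
  · intro m hm
    show MvPowerSeries.coeff m a -
      (if N ≤ m then 0 else MvPowerSeries.coeff m a) = 0
    rw [if_neg hm, sub_self]
end

section
/- Let R be a commutative ring of characteristic p, t ∈ R. Then d([1+t^N]) ∈ W_mΩ¹_R can be written as d([t]^n · c) for a suitable Witt vector c ∈ W_m(R), whenever N = p^{m−1} n; consequently dlog[1 + t^{p^{m−1} n}] lies in [t]^n · W_mΩ¹_R + d([t]^n W_m(R)). -/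
open Finset

namespace Stmt10Aux

variable {p : ℕ} [hp : Fact p.Prime]

/-- Teichmüller multiplication is coefficientwise, over `ℚ`-polynomial rings. -/
theorem teich_mul_aux1 {σ : Type*} (a : MvPolynomial σ ℚ)
    (x : WittVector p (MvPolynomial σ ℚ)) :
    WittVector.teichmuller p a * x = WittVector.mk p (fun i => a ^ p ^ i * x.coeff i) := by
  apply (WittVector.ghostMap.bijective_of_invertible p (MvPolynomial σ ℚ)).injective
  funext i
  show WittVector.ghostComponent i _ = WittVector.ghostComponent i _
  rw [map_mul, WittVector.ghostComponent_teichmuller, WittVector.ghostComponent_apply,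
    WittVector.ghostComponent_apply, aeval_wittPolynomial, aeval_wittPolynomial,
    Finset.mul_sum]
  refine Finset.sum_congr rfl fun j hj => ?_
  simp only [WittVector.coeff_mk]
  have hj' : j ≤ i := by simpa using Nat.lt_succ_iff.mp (Finset.mem_range.mp hj)
  have hpow : (a ^ p ^ j) ^ p ^ (i - j) = a ^ p ^ i := by
    rw [← pow_mul, ← pow_add, Nat.add_sub_cancel' hj']
  rw [mul_pow, hpow]
  ring

/-- Teichmüller multiplication is coefficientwise, over `ℤ`-polynomial rings. -/
theorem teich_mul_aux2 {σ : Type*} (a : MvPolynomial σ ℤ)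
    (x : WittVector p (MvPolynomial σ ℤ)) :
    WittVector.teichmuller p a * x = WittVector.mk p (fun i => a ^ p ^ i * x.coeff i) := by
  let f : MvPolynomial σ ℤ →+* MvPolynomial σ ℚ := MvPolynomial.map (Int.castRingHom ℚ)
  have hf : Function.Injective f := MvPolynomial.map_injective _ Int.cast_injective
  apply WittVector.map_injective f hf
  rw [map_mul, WittVector.map_teichmuller, teich_mul_aux1]
  refine WittVector.ext fun i => ?_
  simp only [WittVector.coeff_mk, WittVector.map_coeff, map_mul, map_pow]

/-- Teichmüller multiplication is coefficientwise, over any commutative ring. -/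
theorem teich_mul {R : Type*} [CommRing R] (a : R) (x : WittVector p R) :
    WittVector.teichmuller p a * x = WittVector.mk p (fun i => a ^ p ^ i * x.coeff i) := by
  let f : MvPolynomial (Option ℕ) ℤ →+* R :=
    (MvPolynomial.aeval (fun o : Option ℕ => o.elim a (fun j => x.coeff j))).toRingHom
  have key := congrArg (WittVector.map f)
    (teich_mul_aux2 (MvPolynomial.X none)
      (WittVector.mk p (fun j => MvPolynomial.X (some j))))
  rw [map_mul, WittVector.map_teichmuller] at key
  have hX : WittVector.map f (WittVector.mk p (fun j => MvPolynomial.X (some j))) = x := by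
    refine WittVector.ext fun i => ?_
    simp only [WittVector.map_coeff, WittVector.coeff_mk]
    simp [f]
  have ha : f (MvPolynomial.X none) = a := by simp [f]
  rw [hX, ha] at key
  convert key using 1
  refine WittVector.ext fun i => ?_
  simp only [WittVector.map_coeff, WittVector.coeff_mk, map_mul, map_pow]
  simp [f]

/-- Lemma 2.10:  every coefficient of `[1+r] - 1` is divisible by `r`. -/
theorem teich_one_add_sub_one {R : Type*} [CommRing R] (r : R) (i : ℕ) :
    ∃ z : R, (WittVector.teichmuller p (1 + r) - 1).coeff i = r * z := by
  set w : WittVector p (Polynomial ℤ) :=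
    WittVector.teichmuller p (1 + Polynomial.X) - 1 with hw
  obtain ⟨y, hy⟩ : (Polynomial.X : Polynomial ℤ) ∣ w.coeff i := by
    rw [Polynomial.X_dvd_iff, Polynomial.coeff_zero_eq_eval_zero]
    have h0 : (Polynomial.evalRingHom (0 : ℤ)) (w.coeff i)
        = (WittVector.map (Polynomial.evalRingHom (0 : ℤ)) w).coeff i :=
      (WittVector.map_coeff _ _ _).symm
    have h1 : WittVector.map (Polynomial.evalRingHom (0 : ℤ)) w = 0 := by
      rw [hw, map_sub, map_one, WittVector.map_teichmuller]
      simp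
    rw [h1] at h0
    simpa using h0
  refine ⟨(Polynomial.aeval r) y, ?_⟩
  have h := WittVector.map_coeff ((Polynomial.aeval r).toRingHom : Polynomial ℤ →+* R) w i
  rw [hw, map_sub, map_one, WittVector.map_teichmuller] at h
  have h2 : ((Polynomial.aeval r).toRingHom : Polynomial ℤ →+* R) (1 + Polynomial.X)
      = 1 + r := by simp
  rw [h2] at h
  rw [h, ← hw, hy]
  simp [mul_assoc]

end Stmt10Aux

/-- Let `R` be a commutative ring of characteristic `p`, `t ∈ R` with
`1 + t^{p^{m-1}n}` a unit.  Work in `W := W_m(R)` and let `d : W →+ M` be (the degree-0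
part of) the de Rham–Witt differential into the `W`-module `M = W_mΩ¹_R`; the only
property used is additivity together with `d(1) = 0` (so `d` kills `W_m(𝔽_p)`).
Then `d([1 + t^{p^{m-1}n}]) = d([t]^n · c)` for a suitable Witt vector `c`, and
consequently `dlog[1 + t^{p^{m-1}n}] = [1+t^{p^{m-1}n}]⁻¹ · d[1+t^{p^{m-1}n}]` lies in
`[t]^n · M + d([t]^n · W)`. -/
theorem stmt10 (p : ℕ) [Fact p.Prime] (R : Type*) [CommRing R] [CharP R p]
    (m n : ℕ) (hm : 1 ≤ m) (t : R) (hu : IsUnit (1 + t ^ (p ^ (m - 1) * n)))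
    (M : Type*) [AddCommGroup M] [Module (TruncatedWittVector p m R) M]
    (d : TruncatedWittVector p m R →+ M) (hd1 : d 1 = 0) :
    (∃ c : TruncatedWittVector p m R,
        d (WittVector.truncate m (WittVector.teichmuller p (1 + t ^ (p ^ (m - 1) * n))))
          = d ((WittVector.truncate m (WittVector.teichmuller p t)) ^ n * c))
      ∧ ∃ v : TruncatedWittVector p m R,
          WittVector.truncate m (WittVector.teichmuller p (1 + t ^ (p ^ (m - 1) * n))) * v = 1
          ∧ v • d (WittVector.truncate m
                (WittVector.teichmuller p (1 + t ^ (p ^ (m - 1) * n))))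
              ∈ Submodule.span (TruncatedWittVector p m R)
                  (Set.range (fun ω : M =>
                      (WittVector.truncate m (WittVector.teichmuller p t)) ^ n • ω)
                    ∪ Set.range (fun w : TruncatedWittVector p m R =>
                      d ((WittVector.truncate m (WittVector.teichmuller p t)) ^ n * w))) := by
  classical
  set q := p ^ (m - 1) with hq
  set s := t ^ (q * n) with hs
  set u := t ^ n with huu
  have hsu : s = u ^ q := by
    rw [hs, huu, ← pow_mul, Nat.mul_comm]
  -- choose the z i from Lemma 2.10
  choose z hz using fun i => Stmt10Aux.teich_one_add_sub_one (p := p) (R := R) s i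
  -- build c
  set c₀ : WittVector p R := WittVector.mk p (fun i => u ^ (q - p ^ i) * z i) with hc₀
  set A := WittVector.truncate m (WittVector.teichmuller p (1 + s)) with hA
  set T := WittVector.truncate m (WittVector.teichmuller p t) with hT
  set c := WittVector.truncate m c₀ with hc
  have hTn : T ^ n = WittVector.truncate m (WittVector.teichmuller p u) := by
    rw [hT, ← map_pow, ← map_pow, huu]
  have hkey : A - 1 = T ^ n * c := by
    rw [hTn, hc, ← map_mul]
    have hA1 : A - 1 = WittVector.truncate m (WittVector.teichmuller p (1 + s) - 1) := by
      rw [hA, map_sub, map_one]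
    rw [hA1]
    ext i
    rw [WittVector.coeff_truncate, WittVector.coeff_truncate]
    rw [Stmt10Aux.teich_mul]
    have hip : p ^ (i : ℕ) ≤ q := by
      rw [hq]
      exact Nat.pow_le_pow_right (‹Fact p.Prime›.out.one_lt.le) (by omega)
    calc (WittVector.teichmuller p (1 + s) - 1).coeff i = s * z i := hz i
      _ = u ^ p ^ (i : ℕ) * (u ^ (q - p ^ (i : ℕ)) * z i) := by
          rw [← mul_assoc, ← pow_add, Nat.add_sub_cancel' hip, hsu]
      _ = (WittVector.mk p fun j => u ^ p ^ j * (c₀.coeff j)).coeff i := by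
          simp only [WittVector.coeff_mk, hc₀]
  have hAc : A = T ^ n * c + 1 := by rw [← hkey]; ring
  have hdA : d A = d (T ^ n * c) := by
    rw [hAc, map_add, hd1, add_zero]
  refine ⟨⟨c, hdA⟩, ?_⟩
  -- the inverse
  refine ⟨WittVector.truncate m (WittVector.teichmuller p ((hu.unit⁻¹ : Rˣ) : R)), ?_, ?_⟩
  · rw [hA, ← map_mul, ← map_mul]
    rw [hu.mul_val_inv, map_one, map_one]
  · rw [hdA]
    refine Submodule.smul_mem _ _ (Submodule.subset_span ?_)
    exact Or.inr ⟨c, rfl⟩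
end

section
/- Let R be an F_p-algebra and m ≥ 1. In W_m(R), for any a ∈ R and n, N ∈ ℕ with N = p^{m−1} n, the element [1 + a t^N]_m − [1]_m (t ∈ R) lies in the ideal [t]_m^n · W_m(R). -/
open MvPolynomial Finset

namespace WittVectorStmt18

open WittVector

universe u

variable {p : ℕ} [hp : Fact p.Prime]

instance teichCoeffZeroIsPoly : IsPoly p fun R _ x => teichmuller p (x.coeff 0) :=
  ⟨⟨fun n => if n = 0 then X 0 else 0, by
    intro R _ x; funext n
    cases n with
    | zero => simp [teichmuller_coeff_zero]
    | succ k => simp [teichmuller_coeff_pos p _ _ (Nat.succ_pos k)]⟩⟩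

private theorem mul_teich_aux : ∀ (R : Type u) [CommRing R] (u x : WittVector p R),
    teichmuller p (u.coeff 0) * x = WittVector.mk p fun i => u.coeff 0 ^ p ^ i * x.coeff i := by
  refine IsPoly₂.ext
    (f := fun R _ u x => teichmuller p (u.coeff 0) * x)
    (g := fun R _ u x => WittVector.mk p fun i => u.coeff 0 ^ p ^ i * x.coeff i)
    inferInstance ⟨⟨fun n => X (0, 0) ^ p ^ n * X (1, n), ?_⟩⟩ ?_
  · intro R _ u x; funext n
    simp [peval, Function.uncurry, coeff_mk]
  · intro R _ u x n
    rw [map_mul, ghostComponent_teichmuller, ghostComponent_apply, ghostComponent_apply,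
      wittPolynomial_eq_sum_C_mul_X_pow, map_sum, map_sum, Finset.mul_sum]
    refine Finset.sum_congr rfl fun i hi => ?_
    rw [Finset.mem_range, Nat.lt_succ_iff] at hi
    simp only [map_mul, map_pow, aeval_X, aeval_C, coeff_mk]
    rw [mul_pow, ← pow_mul, ← pow_add, Nat.add_sub_cancel' hi]
    ring

theorem mul_teichmuller_coeff {R : Type u} [CommRing R] (t : R) (x : WittVector p R) (n : ℕ) :
    (teichmuller p t * x).coeff n = t ^ p ^ n * x.coeff n := by
  have := mul_teich_aux R (teichmuller p t) x
  rw [teichmuller_coeff_zero] at this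
  rw [this, coeff_mk]

/-- Lemma 2.10: every coefficient of `[1+s] - [1]` is divisible by `s`. -/
theorem coeff_teichmuller_sub_dvd {R : Type u} [CommRing R] (s : R) (i : ℕ) :
    s ∣ (teichmuller p (1 + s) - teichmuller p 1 : WittVector p R).coeff i := by
  set D : WittVector p (Polynomial R) :=
    teichmuller p (1 + Polynomial.X) - teichmuller p 1 with hD
  have hX : Polynomial.X ∣ D.coeff i := by
    rw [Polynomial.X_dvd_iff, Polynomial.coeff_zero_eq_eval_zero]
    have h0 : WittVector.map (Polynomial.evalRingHom (0 : R)) D = 0 := by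
      rw [hD, RingHom.map_sub, map_teichmuller, map_teichmuller]
      simp
    have := congrArg (fun z : WittVector p R => z.coeff i) h0
    simpa [WittVector.map_coeff] using this
  obtain ⟨q, hq⟩ := hX
  refine ⟨q.eval s, ?_⟩
  have h1 : WittVector.map (Polynomial.evalRingHom s) D
      = teichmuller p (1 + s) - teichmuller p 1 := by
    rw [hD, RingHom.map_sub, map_teichmuller, map_teichmuller]
    simp
  have := congrArg (fun z : WittVector p R => z.coeff i) h1
  simp only [WittVector.map_coeff] at this
  rw [← this, hq]
  simp

end WittVectorStmt18

/-- Let `R` be an `𝔽_p`-algebra and `m ≥ 1`.  In `W_m(R)`, for any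
`a, t ∈ R` and `n ∈ ℕ`, the element `[1 + a·t^{p^{m−1}n}]_m − [1]_m` lies in the ideal
generated by `[t]_m^n`. -/
theorem stmt18 (p : ℕ) [Fact p.Prime] (R : Type*) [CommRing R] [CharP R p]
    (m : ℕ) (hm : 1 ≤ m) (a t : R) (n : ℕ) :
    WittVector.truncate m (WittVector.teichmuller p (1 + a * t ^ (p ^ (m - 1) * n)))
        - WittVector.truncate m (WittVector.teichmuller p 1)
      ∈ Ideal.span ({(WittVector.truncate m (WittVector.teichmuller p t)) ^ n} :
          Set (TruncatedWittVector p m R)) := by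
  classical
  have hp := (Fact.out : p.Prime)
  set s : R := a * t ^ (p ^ (m - 1) * n) with hs
  set d : WittVector p R := WittVector.teichmuller p (1 + s) - WittVector.teichmuller p 1
    with hd
  choose y hy using fun i => WittVectorStmt18.coeff_teichmuller_sub_dvd (p := p) s i
  set c : WittVector p R := WittVector.mk p (fun i => a * t ^ ((p ^ (m - 1) - p ^ i) * n) * y i)
    with hc
  have hcoeff : ∀ i, i < m → ((WittVector.teichmuller p t) ^ n * c).coeff i = d.coeff i := by
    intro i hi
    have hle : p ^ i ≤ p ^ (m - 1) := Nat.pow_le_pow_right hp.pos (by omega)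
    have h1 : p ^ i * n ≤ p ^ (m - 1) * n := Nat.mul_le_mul_right _ hle
    have h2 : p ^ i * n + (p ^ (m - 1) - p ^ i) * n = p ^ (m - 1) * n := by
      rw [Nat.sub_mul]; omega
    rw [← map_pow, WittVectorStmt18.mul_teichmuller_coeff, hc, WittVector.coeff_mk, hy i]
    rw [← pow_mul, mul_comm n (p ^ i), hs]
    calc t ^ (p ^ i * n) * (a * t ^ ((p ^ (m - 1) - p ^ i) * n) * y i)
        = a * (t ^ (p ^ i * n) * t ^ ((p ^ (m - 1) - p ^ i) * n)) * y i := by ring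
      _ = a * t ^ (p ^ (m - 1) * n) * y i := by rw [← pow_add, h2]
      _ = a * t ^ (p ^ (m - 1) * n) * y i := rfl
  have htrunc : WittVector.truncate m d
      = WittVector.truncate m ((WittVector.teichmuller p t) ^ n * c) := by
    ext i
    rw [WittVector.coeff_truncate, WittVector.coeff_truncate, hcoeff i i.isLt]
  rw [← map_sub, ← hd, htrunc, map_mul, map_pow]
  exact Ideal.mem_span_singleton.2 ⟨WittVector.truncate m c, rfl⟩
end
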